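/- arXiv:2407.15699 — 3 statements merged into one kernel-verified Lean document; each statement's English description precedes it below -/
import Mathlib

section
/- Let $k$ be a commutative ring with $2$ invertible, and let $A$ be the $k$-algebra generated by two elements $T_0, T_1$ subject only to the relations $T_0^2 = -T_0$ and $T_1^2 = -T_1$. Then the element $\zeta := (T_0+1)(T_1+1) + T_1 T_0$ satisfies $\zeta = (T_1+1)(T_0+1) + T_0 T_1$, and $\zeta$ commutes with both $T_0$ and $T_1$, hence is central in $A$. -/
/-- The defining relations of the Iwahori–Hecke algebra of `SL₂` in characteristic `p`:
two generators `T₀, T₁` subject only to `T₀² = -T₀` and `T₁² = -T₁`. -/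
inductive heckeRel (k : Type*) [CommRing k] :
    FreeAlgebra k (Fin 2) → FreeAlgebra k (Fin 2) → Prop
  | rel0 : heckeRel k (FreeAlgebra.ι k 0 * FreeAlgebra.ι k 0) (-(FreeAlgebra.ι k 0))
  | rel1 : heckeRel k (FreeAlgebra.ι k 1 * FreeAlgebra.ι k 1) (-(FreeAlgebra.ι k 1))

/-- The algebra `A` generated by `T₀, T₁` with `Tᵢ² = -Tᵢ`. -/
noncomputable abbrev heckeAlg (k : Type*) [CommRing k] := RingQuot (heckeRel k)

noncomputable def heckeT0 (k : Type*) [CommRing k] : heckeAlg k :=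
  RingQuot.mkAlgHom k (heckeRel k) (FreeAlgebra.ι k 0)

noncomputable def heckeT1 (k : Type*) [CommRing k] : heckeAlg k :=
  RingQuot.mkAlgHom k (heckeRel k) (FreeAlgebra.ι k 1)

private lemma aux_comm0 (A : Type*) [Ring A] (T0 T1 : A) (e0 : T0 * T0 = -T0) :
    ((T0 + 1) * (T1 + 1) + T1 * T0) * T0 = T0 * ((T0 + 1) * (T1 + 1) + T1 * T0) := by
  have l : ((T0 + 1) * (T1 + 1) + T1 * T0) * T0
      = T0 * T1 * T0 + T0 * T0 + T1 * T0 + T0 + T1 * (T0 * T0) := by noncomm_ring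
  have r : T0 * ((T0 + 1) * (T1 + 1) + T1 * T0)
      = T0 * T0 * T1 + T0 * T0 + T0 * T1 + T0 + T0 * (T1 * T0) := by noncomm_ring
  rw [l, r, e0]; noncomm_ring

private lemma aux_comm1 (A : Type*) [Ring A] (T0 T1 : A) (e1 : T1 * T1 = -T1) :
    ((T0 + 1) * (T1 + 1) + T1 * T0) * T1 = T1 * ((T0 + 1) * (T1 + 1) + T1 * T0) := by
  have l : ((T0 + 1) * (T1 + 1) + T1 * T0) * T1
      = T0 * (T1 * T1) + T0 * T1 + T1 * T1 + T1 + T1 * T0 * T1 := by noncomm_ring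
  have r : T1 * ((T0 + 1) * (T1 + 1) + T1 * T0)
      = T1 * T0 * T1 + T1 * T0 + T1 * T1 + T1 + T1 * T1 * T0 := by noncomm_ring
  rw [l, r, e1]; noncomm_ring

/-- `ζ := (T₀+1)(T₁+1) + T₁T₀` satisfies `ζ = (T₁+1)(T₀+1) + T₀T₁`,
commutes with `T₀` and `T₁`, and is central in `A`. -/
theorem stmt3 (k : Type*) [CommRing k] (h2 : IsUnit (2 : k)) :
    ((heckeT0 k + 1) * (heckeT1 k + 1) + heckeT1 k * heckeT0 k =
      (heckeT1 k + 1) * (heckeT0 k + 1) + heckeT0 k * heckeT1 k) ∧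
    (((heckeT0 k + 1) * (heckeT1 k + 1) + heckeT1 k * heckeT0 k) * heckeT0 k =
      heckeT0 k * ((heckeT0 k + 1) * (heckeT1 k + 1) + heckeT1 k * heckeT0 k)) ∧
    (((heckeT0 k + 1) * (heckeT1 k + 1) + heckeT1 k * heckeT0 k) * heckeT1 k =
      heckeT1 k * ((heckeT0 k + 1) * (heckeT1 k + 1) + heckeT1 k * heckeT0 k)) ∧
    (∀ a : heckeAlg k,
      ((heckeT0 k + 1) * (heckeT1 k + 1) + heckeT1 k * heckeT0 k) * a =
        a * ((heckeT0 k + 1) * (heckeT1 k + 1) + heckeT1 k * heckeT0 k)) := by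
  have e0 : heckeT0 k * heckeT0 k = -heckeT0 k := by
    rw [heckeT0, ← map_mul, RingQuot.mkAlgHom_rel k heckeRel.rel0, map_neg]
  have e1 : heckeT1 k * heckeT1 k = -heckeT1 k := by
    rw [heckeT1, ← map_mul, RingQuot.mkAlgHom_rel k heckeRel.rel1, map_neg]
  have hc0 := aux_comm0 (heckeAlg k) (heckeT0 k) (heckeT1 k) e0
  have hc1 := aux_comm1 (heckeAlg k) (heckeT0 k) (heckeT1 k) e1
  refine ⟨by noncomm_ring, hc0, hc1, ?_⟩
  intro a
  obtain ⟨b, rfl⟩ := RingQuot.mkAlgHom_surjective k (heckeRel k) a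
  induction b using FreeAlgebra.induction with
  | grade0 r =>
    rw [AlgHom.commutes]
    exact (Algebra.commutes r _).symm
  | grade1 i =>
    fin_cases i
    · exact hc0
    · exact hc1
  | mul x y hx hy => rw [map_mul, ← mul_assoc, hx, mul_assoc, hy, mul_assoc]
  | add x y hx hy => rw [map_add]; rw [mul_add ((heckeT0 k + 1) * (heckeT1 k + 1) + heckeT1 k * heckeT0 k), hx, hy]; exact (add_mul _ _ _).symm
end

section
/- Let $\mathfrak{O}$ be the ring of integers of a finite extension of $\mathbb{Q}_p$ with maximal ideal $\mathfrak{M}$ and residue field of cardinality $q$, and suppose $q > 3$. Let $n \geq 1$ and let $H$ be the subgroup of $\mathrm{SL}_2(\mathfrak{O})$ generated by the upper unipotent matrices $\begin{pmatrix}1 & a \\ 0 & 1\end{pmatrix}$ with $a \in \mathfrak{O}$ and the lower unipotent matrices $\begin{pmatrix}1 & 0 \\ c & 1\end{pmatrix}$ with $c \in \mathfrak{M}^n$. Then the intersection of $H$ with the diagonal torus $\{\mathrm{diag}(t, t^{-1}) : t \in \mathfrak{O}^{\times}\}$ equals $\{\mathrm{diag}(t, t^{-1}) : t \in 1 + \mathfrak{M}^n\}$,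 and moreover $H = \begin{pmatrix} 1+\mathfrak{M}^n & \mathfrak{O} \\ \mathfrak{M}^n & 1+\mathfrak{M}^n \end{pmatrix} \cap \mathrm{SL}_2(\mathfrak{O})$. -/
/-! Let `Γ₁(I) ≤ SL₂(R)` be the preimage of the upper unitriangular group of `SL₂(R ⧸ I)`; it
contains the generators. Conversely, when `I` lies in the Jacobson radical (as `𝔐ⁿ` does for
`n ≥ 1`), the entry `a` of `g = (a, b; c, d) ∈ Γ₁(I)` is a unit, so
`g = (1, 0; c a⁻¹, 1) · diag(a, a⁻¹) · (1, a⁻¹ b; 0, 1)`, and the torus element factors as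
`diag(a, a⁻¹) = (1, 1; 0, 1) (1, 0; a - 1, 1) (1, -a⁻¹; 0, 1) (1, 0; a (1 - a), 1)`,
all of whose lower entries lie in `I` because `a ≡ 1 mod I`. For diagonal `g`, `d = a⁻¹`, so
`a ≡ 1` forces `d ≡ 1`. -/

open IsLocalRing
open scoped MatrixGroups

namespace SL2

variable {R : Type*} [CommRing R]

def upper (x : R) : SL(2, R) := ⟨!![1, x; 0, 1], by simp [Matrix.det_fin_two_of]⟩

def lower (y : R) : SL(2, R) := ⟨!![1, 0; y, 1], by simp [Matrix.det_fin_two_of]⟩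

def diag (u : Rˣ) : SL(2, R) := ⟨!![(u : R), 0; 0, ↑u⁻¹], by simp [Matrix.det_fin_two_of]⟩

@[simp] lemma coe_upper (x : R) : (upper x : Matrix (Fin 2) (Fin 2) R) = !![1, x; 0, 1] := rfl

@[simp] lemma coe_lower (y : R) : (lower y : Matrix (Fin 2) (Fin 2) R) = !![1, 0; y, 1] := rfl

@[simp] lemma coe_diag (u : Rˣ) : (diag u : Matrix (Fin 2) (Fin 2) R) = !![(u : R), 0; 0, ↑u⁻¹] :=
  rfl

lemma det_eq_one (g : SL(2, R)) : g 0 0 * g 1 1 - g 0 1 * g 1 0 = 1 := by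
  rw [← Matrix.det_fin_two]; exact g.2

lemma mul_apply (g h : SL(2, R)) (i j : Fin 2) :
    (g * h) i j = g i 0 * h 0 j + g i 1 * h 1 j := by
  rw [Matrix.SpecialLinearGroup.coe_mul, Matrix.mul_apply, Fin.sum_univ_two]

lemma diag_eq_upper_mul_lower (u : Rˣ) :
    diag u =
      upper 1 * lower ((u : R) - 1) * upper (-(↑u⁻¹ : R)) * lower ((u : R) * (1 - (u : R))) := by
  ext i j
  simp only [Matrix.SpecialLinearGroup.coe_mul, coe_upper, coe_lower, coe_diag,
    Matrix.mul_fin_two]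
  fin_cases i <;> fin_cases j <;>
    simp only [Fin.zero_eta, Fin.mk_one, Matrix.of_apply, Matrix.cons_val', Matrix.cons_val_zero,
      Matrix.cons_val_one, Matrix.cons_val_fin_one]
  · linear_combination (u : R) * (1 - (u : R)) * u.mul_inv
  · linear_combination u.mul_inv
  · linear_combination ((u : R) - 1) * (1 - (u : R)) * u.mul_inv
  · linear_combination u.mul_inv

lemma eq_lower_mul_diag_mul_upper (g : SL(2, R)) (u : Rˣ) (hu : g 0 0 = u) :
    g = lower (g 1 0 * ↑u⁻¹) * diag u * upper (↑u⁻¹ * g 0 1) := by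
  have hdet : (u : R) * g 1 1 - g 0 1 * g 1 0 = 1 := hu ▸ det_eq_one g
  ext i j
  simp only [Matrix.SpecialLinearGroup.coe_mul, coe_upper, coe_lower, coe_diag,
    Matrix.mul_fin_two]
  fin_cases i <;> fin_cases j <;>
    simp only [Fin.zero_eta, Fin.mk_one, Matrix.of_apply, Matrix.cons_val', Matrix.cons_val_zero,
      Matrix.cons_val_one, Matrix.cons_val_fin_one]
  · linear_combination hu
  · linear_combination (-g 0 1) * u.mul_inv
  · linear_combination (-g 1 0) * u.inv_mul
  · linear_combination (-(↑u⁻¹ * g 1 0 * g 0 1) - g 1 1) * u.inv_mul + ↑u⁻¹ * hdet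

variable (R) in
def upperUnipotent : Subgroup SL(2, R) where
  carrier := {g | g 0 0 = 1 ∧ g 1 1 = 1 ∧ g 1 0 = 0}
  mul_mem' := by
    rintro g h ⟨ga, gd, gc⟩ ⟨ha, hd, hc⟩
    simp [mul_apply, ga, gd, gc, ha, hd, hc]
  one_mem' := by simp
  inv_mem' := by
    rintro g ⟨ga, gd, gc⟩
    simp [Matrix.SpecialLinearGroup.coe_inv, Matrix.adjugate_fin_two, ga, gd, gc]

@[simp] lemma mem_upperUnipotent {g : SL(2, R)} :
    g ∈ upperUnipotent R ↔ g 0 0 = 1 ∧ g 1 1 = 1 ∧ g 1 0 = 0 := Iff.rfl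

def lowerUnipotent (I : Ideal R) : Set SL(2, R) :=
  {g | g 0 0 = 1 ∧ g 1 1 = 1 ∧ g 0 1 = 0 ∧ g 1 0 ∈ I}

def Gamma1 (I : Ideal R) : Subgroup SL(2, R) :=
  (upperUnipotent (R ⧸ I)).comap (Matrix.SpecialLinearGroup.map (Ideal.Quotient.mk I))

lemma mem_Gamma1 {I : Ideal R} {g : SL(2, R)} :
    g ∈ Gamma1 I ↔ g 0 0 - 1 ∈ I ∧ g 1 1 - 1 ∈ I ∧ g 1 0 ∈ I := by
  simp only [Gamma1, Subgroup.mem_comap, mem_upperUnipotent,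
    Matrix.SpecialLinearGroup.map_apply_coe, RingHom.mapMatrix_apply, Matrix.map_apply]
  simp only [← map_one (Ideal.Quotient.mk I), Ideal.Quotient.eq, Ideal.Quotient.eq_zero_iff_mem]

lemma upperUnipotent_le_Gamma1 (I : Ideal R) : upperUnipotent R ≤ Gamma1 I := by
  rintro g ⟨ha, hd, hc⟩
  simp [mem_Gamma1, ha, hd, hc]

lemma lowerUnipotent_subset_Gamma1 (I : Ideal R) : lowerUnipotent I ⊆ Gamma1 I := by
  rintro g ⟨ha, hd, -, hc⟩
  simp [mem_Gamma1, ha, hd, hc]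

lemma closure_le_Gamma1 (I : Ideal R) :
    Subgroup.closure (upperUnipotent R ∪ lowerUnipotent I) ≤ Gamma1 I :=
  (Subgroup.closure_le _).2 <|
    Set.union_subset (upperUnipotent_le_Gamma1 I) (lowerUnipotent_subset_Gamma1 I)

lemma upper_mem_closure (I : Ideal R) (x : R) :
    upper x ∈ Subgroup.closure (upperUnipotent R ∪ lowerUnipotent I) :=
  Subgroup.subset_closure (Or.inl (by simp))

lemma lower_mem_closure {I : Ideal R} {y : R} (hy : y ∈ I) :
    lower y ∈ Subgroup.closure (upperUnipotent R ∪ lowerUnipotent I) :=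
  Subgroup.subset_closure (Or.inr (by simpa [lowerUnipotent] using hy))

lemma diag_mem_closure {I : Ideal R} {u : Rˣ} (hu : (u : R) - 1 ∈ I) :
    diag u ∈ Subgroup.closure (upperUnipotent R ∪ lowerUnipotent I) := by
  have hu' : (u : R) * (1 - u) ∈ I := I.mul_mem_left _ (by rwa [← neg_sub, neg_mem_iff])
  rw [diag_eq_upper_mul_lower]
  exact mul_mem (mul_mem (mul_mem (upper_mem_closure I 1) (lower_mem_closure hu))
    (upper_mem_closure I _)) (lower_mem_closure hu')

lemma Gamma1_le_closure {I : Ideal R} (hI : I ≤ (⊥ : Ideal R).jacobson) :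
    Gamma1 I ≤ Subgroup.closure (upperUnipotent R ∪ lowerUnipotent I) := by
  intro g hg
  obtain ⟨ha, -, hc⟩ := mem_Gamma1.1 hg
  obtain ⟨u, hu⟩ := Ideal.isUnit_of_sub_one_mem_jacobson_bot _ (hI ha)
  rw [eq_lower_mul_diag_mul_upper g u hu.symm]
  exact mul_mem (mul_mem (lower_mem_closure (I.mul_mem_right _ hc))
    (diag_mem_closure (hu ▸ ha))) (upper_mem_closure I _)

theorem closure_eq_Gamma1 {I : Ideal R} (hI : I ≤ (⊥ : Ideal R).jacobson) :
    Subgroup.closure (upperUnipotent R ∪ lowerUnipotent I) = Gamma1 I :=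
  le_antisymm (closure_le_Gamma1 I) (Gamma1_le_closure hI)

lemma mem_Gamma1_iff_of_apply_one_zero {I : Ideal R} {g : SL(2, R)} (hc : g 1 0 = 0) :
    g ∈ Gamma1 I ↔ g 0 0 - 1 ∈ I := by
  have hd : g 1 1 - 1 = -g 1 1 * (g 0 0 - 1) := by
    linear_combination det_eq_one g + g 0 1 * hc
  rw [mem_Gamma1, hd, hc]
  exact ⟨fun h => h.1, fun h => ⟨h, I.mul_mem_left _ h, I.zero_mem⟩⟩

end SL2

theorem stmt7_general (𝒪 : Type*) [CommRing 𝒪] [IsDomain 𝒪] [IsDiscreteValuationRing 𝒪]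
    (n : ℕ) (hn : 1 ≤ n) :
    ∀ g : Matrix.SpecialLinearGroup (Fin 2) 𝒪,
      (g ∈ Subgroup.closure
        ({g' : Matrix.SpecialLinearGroup (Fin 2) 𝒪 |
            g' 0 0 = 1 ∧ g' 1 1 = 1 ∧ g' 1 0 = 0} ∪
         {g' : Matrix.SpecialLinearGroup (Fin 2) 𝒪 |
            g' 0 0 = 1 ∧ g' 1 1 = 1 ∧ g' 0 1 = 0 ∧ g' 1 0 ∈ maximalIdeal 𝒪 ^ n}) ↔
        (g 0 0 - 1 ∈ maximalIdeal 𝒪 ^ n ∧ g 1 1 - 1 ∈ maximalIdeal 𝒪 ^ n ∧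
          g 1 0 ∈ maximalIdeal 𝒪 ^ n)) ∧
      ((g 0 1 = 0 ∧ g 1 0 = 0) →
        (g ∈ Subgroup.closure
          ({g' : Matrix.SpecialLinearGroup (Fin 2) 𝒪 |
              g' 0 0 = 1 ∧ g' 1 1 = 1 ∧ g' 1 0 = 0} ∪
           {g' : Matrix.SpecialLinearGroup (Fin 2) 𝒪 |
              g' 0 0 = 1 ∧ g' 1 1 = 1 ∧ g' 0 1 = 0 ∧ g' 1 0 ∈ maximalIdeal 𝒪 ^ n}) ↔
          g 0 0 - 1 ∈ maximalIdeal 𝒪 ^ n)) := by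
  have hI : maximalIdeal 𝒪 ^ n ≤ (⊥ : Ideal 𝒪).jacobson :=
    (Ideal.pow_le_self (by omega)).trans (jacobson_eq_maximalIdeal ⊥ bot_ne_top).ge
  intro g
  have hH := SetLike.ext_iff.1 (SL2.closure_eq_Gamma1 hI) g
  exact ⟨hH.trans SL2.mem_Gamma1,
    fun ⟨_, hc⟩ => hH.trans (SL2.mem_Gamma1_iff_of_apply_one_zero hc)⟩

/-- let `𝒪` be the ring of integers of a finite extension of `ℚ_p` (modelled as a
discrete valuation ring) with maximal ideal `𝔐` and residue field of cardinality `q > 3`.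
For `n ≥ 1`, let `H ≤ SL₂(𝒪)` be the subgroup generated by the upper unipotent matrices
`(1, a; 0, 1)`, `a ∈ 𝒪`, and the lower unipotent matrices `(1, 0; c, 1)`, `c ∈ 𝔐ⁿ`.
Then `H = (1 + 𝔐ⁿ, 𝒪; 𝔐ⁿ, 1 + 𝔐ⁿ) ∩ SL₂(𝒪)`, and in particular the intersection of `H`
with the diagonal torus is `{diag(t, t⁻¹) : t ∈ 1 + 𝔐ⁿ}`. -/
theorem stmt7 (𝒪 : Type*) [CommRing 𝒪] [IsDomain 𝒪] [IsDiscreteValuationRing 𝒪]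
    (hq : 3 < Nat.card (ResidueField 𝒪)) (n : ℕ) (hn : 1 ≤ n) :
    ∀ g : Matrix.SpecialLinearGroup (Fin 2) 𝒪,
      (g ∈ Subgroup.closure
        ({g' : Matrix.SpecialLinearGroup (Fin 2) 𝒪 |
            g' 0 0 = 1 ∧ g' 1 1 = 1 ∧ g' 1 0 = 0} ∪
         {g' : Matrix.SpecialLinearGroup (Fin 2) 𝒪 |
            g' 0 0 = 1 ∧ g' 1 1 = 1 ∧ g' 0 1 = 0 ∧ g' 1 0 ∈ maximalIdeal 𝒪 ^ n}) ↔
        (g 0 0 - 1 ∈ maximalIdeal 𝒪 ^ n ∧ g 1 1 - 1 ∈ maximalIdeal 𝒪 ^ n ∧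
          g 1 0 ∈ maximalIdeal 𝒪 ^ n)) ∧
      ((g 0 1 = 0 ∧ g 1 0 = 0) →
        (g ∈ Subgroup.closure
          ({g' : Matrix.SpecialLinearGroup (Fin 2) 𝒪 |
              g' 0 0 = 1 ∧ g' 1 1 = 1 ∧ g' 1 0 = 0} ∪
           {g' : Matrix.SpecialLinearGroup (Fin 2) 𝒪 |
              g' 0 0 = 1 ∧ g' 1 1 = 1 ∧ g' 0 1 = 0 ∧ g' 1 0 ∈ maximalIdeal 𝒪 ^ n}) ↔
          g 0 0 - 1 ∈ maximalIdeal 𝒪 ^ n)) :=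
  stmt7_general 𝒪 n hn
end

section
/- Let $\mathfrak{O}$ be the ring of integers of a finite extension of $\mathbb{Q}_p$ with odd residue characteristic $p$, maximal ideal $\mathfrak{M}$, and residue field of size $q > 3$. Let $L$ be the subgroup of $\mathrm{SL}_2(\mathfrak{O})$ generated by $-\mathrm{id}$ together with all matrices $\begin{pmatrix} a & b \\ c & d \end{pmatrix} \in \mathrm{SL}_2(\mathfrak{O})$ with $a, d \in 1+\mathfrak{M}$, $b \in \mathfrak{M}^2$, $c \in \mathfrak{O}$. Then the closure of the commutator subgroup of $L$ equals $\left\{\begin{pmatrix} a & b \\ c & d\end{pmatrix} \in \mathrm{SL}_2(\mathfrak{O}) : a, d \in 1+\mathfrak{M}^2,\ b \in \mathfrak{M}^3,\ c \in \mathfrak{M}\right\}$. -/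
/-!
Let `M` be the group of matrices `(a b; c d)` with `b ∈ 𝔐²` and `a ≡ d mod 𝔐`; it contains `L`.
For `g, h ∈ M` we have `⁅g, h⁆ - 1 = (g h - h g) (h g)⁻¹`, where the entries of `g h - h g` lie in
`𝔐², 𝔐³; 𝔐, 𝔐²` and this pattern survives right multiplication by `M`. Hence `⁅L, L⁆` lies in the
group `H` on the right-hand side, which is open and so closed.

Conversely, for a uniformizer `π` put `u = 1 + π`. Then `diag(u, u⁻¹) ∈ L`, and `u² - 1 = π (2 + π)`
is again a uniformizer because `p` is odd. Commutators with `diag(u, u⁻¹)` therefore give every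
lower unipotent with entry in `𝔐` and every upper unipotent with entry in `𝔐³`. The remaining
diagonal factor in the Iwahori decomposition of an element of `H` is a commutator of two unipotents
of `L` times two such unipotents. So `⁅L, L⁆ = H`, which is already closed.
-/

open IsLocalRing

/-- `SL₂(𝒪)` carries the subspace topology from the (product) topology on matrices. -/
instance SL2.topologicalSpace (𝒪 : Type*) [CommRing 𝒪] [TopologicalSpace 𝒪] :
    TopologicalSpace (Matrix.SpecialLinearGroup (Fin 2) 𝒪) :=
  inferInstanceAs (TopologicalSpace {A : Matrix (Fin 2) (Fin 2) 𝒪 // A.det = 1})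

open scoped MatrixGroups commutatorElement

namespace Matrix.SpecialLinearGroup

variable {R : Type*} [CommRing R]

lemma commutator_sub_one {n : Type*} [Fintype n] [DecidableEq n]
    (g h : SpecialLinearGroup n R) :
    ((⁅g, h⁆ : SpecialLinearGroup n R) : Matrix n n R) - 1 =
      ((g : Matrix n n R) * h - h * g) * ((h * g)⁻¹ : SpecialLinearGroup n R) := by
  rw [show ⁅g, h⁆ = g * h * (h * g)⁻¹ by group, sub_mul, ← coe_mul, ← coe_mul, ← coe_mul,
    ← coe_mul, mul_inv_cancel, coe_one]

lemma mul_apply_fin_two (g h : SL(2, R)) (i j : Fin 2) :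
    (g * h) i j = g i 0 * h 0 j + g i 1 * h 1 j := by
  simp [coe_mul, Matrix.mul_apply, Fin.sum_univ_two]

@[simp] lemma inv_apply_zero_zero (g : SL(2, R)) : g⁻¹ 0 0 = g 1 1 := by simp [SL2_inv_expl]
@[simp] lemma inv_apply_zero_one (g : SL(2, R)) : g⁻¹ 0 1 = -g 0 1 := by simp [SL2_inv_expl]
@[simp] lemma inv_apply_one_one (g : SL(2, R)) : g⁻¹ 1 1 = g 0 0 := by simp [SL2_inv_expl]

local notation:1024 "↑ₘ" A:1024 => ((A : SL(2, R)) : Matrix (Fin 2) (Fin 2) R)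

variable {I : Ideal R}

def lowerScalarSubgroup (I : Ideal R) : Subgroup SL(2, R) where
  carrier := {g | g 0 1 ∈ I ^ 2 ∧ g 0 0 - g 1 1 ∈ I}
  one_mem' := by simp
  mul_mem' := by
    rintro g h ⟨hg₁, hg₂⟩ ⟨hh₁, hh₂⟩
    have hI : I ^ 2 ≤ I := Ideal.pow_le_self two_ne_zero
    refine ⟨?_, ?_⟩
    · rw [mul_apply_fin_two]
      exact add_mem ((I ^ 2).mul_mem_left _ hh₁) ((I ^ 2).mul_mem_right _ hg₁)
    · have : (g * h) 0 0 - (g * h) 1 1 = h 0 0 * (g 0 0 - g 1 1) + g 1 1 * (h 0 0 - h 1 1)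
          + g 0 1 * h 1 0 - g 1 0 * h 0 1 := by
        rw [mul_apply_fin_two, mul_apply_fin_two]; ring
      rw [this]
      exact sub_mem (add_mem (add_mem (I.mul_mem_left _ hg₂) (I.mul_mem_left _ hh₂))
        (I.mul_mem_right _ (hI hg₁))) (I.mul_mem_left _ (hI hh₁))
  inv_mem' := by
    rintro g ⟨hg₁, hg₂⟩
    rw [Set.mem_ofPred_eq, inv_apply_zero_one, inv_apply_zero_zero, inv_apply_one_one, ← neg_sub]
    exact ⟨neg_mem hg₁, neg_mem hg₂⟩

def levelLattice (I : Ideal R) : Submodule R (Matrix (Fin 2) (Fin 2) R) where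
  carrier := {A | A 0 0 ∈ I ^ 2 ∧ A 1 1 ∈ I ^ 2 ∧ A 0 1 ∈ I ^ 3 ∧ A 1 0 ∈ I}
  zero_mem' := by simp
  add_mem' := fun ⟨ha₀, ha₁, ha₂, ha₃⟩ ⟨hb₀, hb₁, hb₂, hb₃⟩ =>
    ⟨add_mem ha₀ hb₀, add_mem ha₁ hb₁, add_mem ha₂ hb₂, add_mem ha₃ hb₃⟩
  smul_mem' := fun c _ ⟨h₀, h₁, h₂, h₃⟩ =>
    ⟨Ideal.mul_mem_left _ c h₀, Ideal.mul_mem_left _ c h₁, Ideal.mul_mem_left _ c h₂,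
      Ideal.mul_mem_left _ c h₃⟩

lemma mem_levelLattice {A : Matrix (Fin 2) (Fin 2) R} :
    A ∈ levelLattice I ↔ A 0 0 ∈ I ^ 2 ∧ A 1 1 ∈ I ^ 2 ∧ A 0 1 ∈ I ^ 3 ∧ A 1 0 ∈ I :=
  Iff.rfl

lemma mul_mem_levelLattice {A B : Matrix (Fin 2) (Fin 2) R} (hA : A ∈ levelLattice I)
    (hB : B 0 1 ∈ I ^ 2) : A * B ∈ levelLattice I := by
  obtain ⟨h₀₀, h₁₁, h₀₁, h₁₀⟩ := hA
  have h₀₀₀₁ : A 0 0 * B 0 1 ∈ I ^ 3 :=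
    Ideal.pow_le_pow_right (by norm_num) (pow_add I 2 2 ▸ Ideal.mul_mem_mul h₀₀ hB)
  refine mem_levelLattice.2 ⟨?_, ?_, ?_, ?_⟩ <;>
    simp only [Matrix.mul_apply, Fin.sum_univ_two]
  · exact add_mem (Ideal.mul_mem_right _ _ h₀₀)
      (Ideal.mul_mem_right _ _ (Ideal.pow_le_pow_right (by norm_num) h₀₁))
  · exact add_mem (Ideal.mul_mem_left _ _ hB) (Ideal.mul_mem_right _ _ h₁₁)
  · exact add_mem h₀₀₀₁ (Ideal.mul_mem_right _ _ h₀₁)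
  · exact add_mem (Ideal.mul_mem_right _ _ h₁₀)
      (Ideal.mul_mem_right _ _ (Ideal.pow_le_self two_ne_zero h₁₁))

def levelSubgroup (I : Ideal R) : Subgroup SL(2, R) where
  carrier := {g | ↑ₘg - 1 ∈ levelLattice I}
  one_mem' := by simp
  mul_mem' {g h} hg hh := by
    have : ↑ₘ(g * h) - 1 = (↑ₘg - 1) * ↑ₘh + (↑ₘh - 1) := by
      rw [coe_mul]; noncomm_ring
    rw [Set.mem_ofPred_eq, this]
    refine add_mem (mul_mem_levelLattice hg ?_) hh
    simpa using Ideal.pow_le_pow_right (by norm_num) (mem_levelLattice.1 hh).2.2.1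
  inv_mem' {g} hg := by
    have : ↑ₘg⁻¹ - 1 = -((↑ₘg - 1) * ↑ₘg⁻¹) := by
      rw [sub_mul, ← coe_mul, mul_inv_cancel, coe_one, one_mul, neg_sub]
    rw [Set.mem_ofPred_eq, this]
    refine neg_mem (mul_mem_levelLattice hg ?_)
    simpa using Ideal.pow_le_pow_right (by norm_num) (mem_levelLattice.1 hg).2.2.1

lemma mem_levelSubgroup {g : SL(2, R)} : g ∈ levelSubgroup I ↔
    g 0 0 - 1 ∈ I ^ 2 ∧ g 1 1 - 1 ∈ I ^ 2 ∧ g 0 1 ∈ I ^ 3 ∧ g 1 0 ∈ I := by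
  simp [levelSubgroup, mem_levelLattice]

def lowerGenSubgroup (I : Ideal R) : Subgroup SL(2, R) :=
  Subgroup.closure {g | ↑ₘg = -1 ∨ (g 0 0 - 1 ∈ I ∧ g 1 1 - 1 ∈ I ∧ g 0 1 ∈ I ^ 2)}

lemma lowerGenSubgroup_le_lowerScalarSubgroup : lowerGenSubgroup I ≤ lowerScalarSubgroup I := by
  refine (Subgroup.closure_le _).2 ?_
  rintro g (hg | ⟨hg₀, hg₁, hg₂⟩)
  · have hg' (i j : Fin 2) : g i j = (-1 : Matrix (Fin 2) (Fin 2) R) i j := by rw [← hg]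
    simp [lowerScalarSubgroup, hg']
  · exact ⟨hg₂, by simpa using sub_mem hg₀ hg₁⟩

lemma mul_sub_mul_mem_levelLattice {g h : SL(2, R)} (hg : g ∈ lowerScalarSubgroup I)
    (hh : h ∈ lowerScalarSubgroup I) : ↑ₘg * ↑ₘh - ↑ₘh * ↑ₘg ∈ levelLattice I := by
  obtain ⟨hg₁, hg₂⟩ := hg
  obtain ⟨hh₁, hh₂⟩ := hh
  refine mem_levelLattice.2 ⟨?_, ?_, ?_, ?_⟩ <;>
    simp only [Matrix.sub_apply, Matrix.mul_apply, Fin.sum_univ_two]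
  · convert sub_mem ((I ^ 2).mul_mem_right (h 1 0) hg₁) ((I ^ 2).mul_mem_right (g 1 0) hh₁)
      using 1
    ring
  · convert sub_mem ((I ^ 2).mul_mem_left (g 1 0) hh₁) ((I ^ 2).mul_mem_left (h 1 0) hg₁)
      using 1
    ring
  · convert sub_mem (pow_succ I 2 ▸ Ideal.mul_mem_mul hh₁ hg₂)
      (pow_succ I 2 ▸ Ideal.mul_mem_mul hg₁ hh₂) using 1
    ring
  · convert sub_mem (I.mul_mem_left (g 1 0) hh₂) (I.mul_mem_left (h 1 0) hg₂) using 1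
    ring

lemma commutator_lowerScalarSubgroup_le :
    ⁅lowerScalarSubgroup I, lowerScalarSubgroup I⁆ ≤ levelSubgroup I := by
  refine Subgroup.commutator_le.2 fun g hg h hh => ?_
  show ↑ₘ⁅g, h⁆ - 1 ∈ levelLattice I
  rw [commutator_sub_one]
  exact mul_mem_levelLattice (mul_sub_mul_mem_levelLattice hg hh)
    ((lowerScalarSubgroup I).inv_mem (mul_mem hh hg)).1

section Topology

variable [TopologicalSpace R] [IsTopologicalRing R]

lemma isClosed_levelLattice (hI : IsAdic I) :
    IsClosed (levelLattice I : Set (Matrix (Fin 2) (Fin 2) R)) := by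
  have hentry (i j : Fin 2) (n : ℕ) : IsClosed {A : Matrix (Fin 2) (Fin 2) R | A i j ∈ I ^ n} :=
    (AddSubgroup.isClosed_of_isOpen (I ^ n).toAddSubgroup ((isAdic_iff.1 hI).1 n)).preimage
      (continuous_id.matrix_elem i j)
  have h₁₀ := hentry 1 0 1
  rw [pow_one] at h₁₀
  exact (hentry 0 0 2).inter ((hentry 1 1 2).inter ((hentry 0 1 3).inter h₁₀))

lemma isClosed_levelSubgroup (hI : IsAdic I) : IsClosed (levelSubgroup I : Set SL(2, R)) :=
  (isClosed_levelLattice hI).preimage (continuous_subtype_val.sub continuous_const)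

end Topology

def diagUnit (u : Rˣ) : SL(2, R) := ⟨!![(u : R), 0; 0, ↑u⁻¹], by simp⟩

@[simp] lemma coe_diagUnit (u : Rˣ) : ↑ₘ(diagUnit u) = !![(u : R), 0; 0, ↑u⁻¹] := rfl

lemma diagUnit_inv (u : Rˣ) : (diagUnit u)⁻¹ = diagUnit u⁻¹ :=
  inv_eq_of_mul_eq_one_right <| Subtype.ext <| by simp [coe_mul, Matrix.one_fin_two]

@[simp] lemma coe_transvection_zero_one (b : R) :
    ↑ₘ(transvection zero_ne_one b) = !![1, b; 0, 1] := by
  ext i j; fin_cases i <;> fin_cases j <;> simp [transvection_coe]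

@[simp] lemma coe_transvection_one_zero (c : R) :
    ↑ₘ(transvection one_ne_zero c) = !![1, 0; c, 1] := by
  ext i j; fin_cases i <;> fin_cases j <;> simp [transvection_coe]

lemma commutator_diagUnit_transvection_zero_one (u : Rˣ) (b : R) :
    ⁅diagUnit u, transvection zero_ne_one b⁆ =
      (transvection zero_ne_one (((u : R) ^ 2 - 1) * b) : SL(2, R)) := by
  rw [commutatorElement_def, diagUnit_inv, transvection_inv]
  refine Subtype.ext ?_
  simp
  ring

lemma commutator_diagUnit_transvection_one_zero (u : Rˣ) (c : R) :
    ⁅diagUnit u, transvection one_ne_zero c⁆ =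
      (transvection one_ne_zero (((↑u⁻¹ : R) ^ 2 - 1) * c) : SL(2, R)) := by
  rw [commutatorElement_def, diagUnit_inv, transvection_inv]
  refine Subtype.ext ?_
  simp
  ring

lemma diagUnit_eq_commutator_mul (a : Rˣ) :
    diagUnit a =
      ⁅(transvection one_ne_zero 1 : SL(2, R)), transvection zero_ne_one (1 - (a : R))⁆ *
      transvection zero_ne_one (-(↑a⁻¹ * ((a : R) - 1) ^ 2)) *
      transvection one_ne_zero (-((a : R) * (a - 1))) := by
  rw [commutatorElement_def, transvection_inv, transvection_inv]
  refine Subtype.ext ?_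
  simp only [coe_mul, coe_diagUnit, coe_transvection_zero_one, coe_transvection_one_zero,
    Matrix.mul_fin_two]
  have h := a.mul_inv
  ext i j
  fin_cases i <;> fin_cases j <;> simp
  · ring
  · ring
  · linear_combination (-((a : R) - 1) ^ 4) * h
  · linear_combination ((a : R) ^ 2 - 3 * a + 3) * h

lemma eq_transvection_mul_diagUnit_mul_transvection (g : SL(2, R)) (a : Rˣ)
    (ha : (a : R) = g 0 0) :
    g = transvection one_ne_zero (g 1 0 * ↑a⁻¹) * diagUnit a *
      transvection zero_ne_one (↑a⁻¹ * g 0 1) := by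
  refine Subtype.ext ?_
  simp only [coe_mul, coe_diagUnit, coe_transvection_zero_one, coe_transvection_one_zero,
    Matrix.mul_fin_two]
  have h := a.mul_inv
  have hdet : g 0 0 * g 1 1 - g 0 1 * g 1 0 = 1 := by
    rw [← Matrix.det_fin_two]; exact g.2
  ext i j
  fin_cases i <;> fin_cases j <;> simp
  · exact ha.symm
  · linear_combination (↑a⁻¹ : R) * hdet - g 1 1 * h + ↑a⁻¹ * g 1 1 * ha

lemma transvection_one_zero_mem_lowerGenSubgroup (c : R) :
    transvection one_ne_zero c ∈ lowerGenSubgroup I :=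
  Subgroup.subset_closure (Or.inr ⟨by simp, by simp, by simp⟩)

lemma transvection_zero_one_mem_lowerGenSubgroup {b : R} (hb : b ∈ I ^ 2) :
    transvection zero_ne_one b ∈ lowerGenSubgroup I :=
  Subgroup.subset_closure (Or.inr ⟨by simp, by simp, by simpa using hb⟩)

lemma diagUnit_mem_lowerGenSubgroup {u : Rˣ} (hu : (u : R) - 1 ∈ I) :
    diagUnit u ∈ lowerGenSubgroup I := by
  have hu' : (↑u⁻¹ : R) - 1 ∈ I := by
    rw [show (↑u⁻¹ : R) - 1 = -(↑u⁻¹ * ((u : R) - 1)) by rw [mul_sub, u.inv_mul]; ring]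
    exact neg_mem (I.mul_mem_left _ hu)
  exact Subgroup.subset_closure (Or.inr ⟨by simpa using hu, by simpa using hu', by simp⟩)

lemma transvection_one_zero_mem_commutator {u : Rˣ} (hu : (u : R) - 1 ∈ I)
    (hspan : I = Ideal.span {(u : R) ^ 2 - 1}) {c : R} (hc : c ∈ I) :
    transvection one_ne_zero c ∈ ⁅lowerGenSubgroup I, lowerGenSubgroup I⁆ := by
  obtain ⟨d, rfl⟩ := Ideal.mem_span_singleton'.1 (hspan ▸ hc)
  have : d * ((u : R) ^ 2 - 1) = ((↑u⁻¹ : R) ^ 2 - 1) * -((u : R) ^ 2 * d) := by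
    linear_combination (d * ((u : R) * ↑u⁻¹ + 1)) * u.mul_inv
  rw [this, ← commutator_diagUnit_transvection_one_zero]
  exact Subgroup.commutator_mem_commutator (diagUnit_mem_lowerGenSubgroup hu)
    (transvection_one_zero_mem_lowerGenSubgroup _)

lemma transvection_zero_one_mem_commutator {u : Rˣ} (hu : (u : R) - 1 ∈ I)
    (hspan : I = Ideal.span {(u : R) ^ 2 - 1}) {b : R} (hb : b ∈ I ^ 3) :
    transvection zero_ne_one b ∈ ⁅lowerGenSubgroup I, lowerGenSubgroup I⁆ := by
  rw [pow_succ', hspan, Ideal.mem_span_singleton_mul, ← hspan] at hb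
  obtain ⟨d, hd, rfl⟩ := hb
  rw [← commutator_diagUnit_transvection_zero_one]
  exact Subgroup.commutator_mem_commutator (diagUnit_mem_lowerGenSubgroup hu)
    (transvection_zero_one_mem_lowerGenSubgroup hd)

lemma diagUnit_mem_commutator {u : Rˣ} (hu : (u : R) - 1 ∈ I)
    (hspan : I = Ideal.span {(u : R) ^ 2 - 1}) {a : Rˣ} (ha : (a : R) - 1 ∈ I ^ 2) :
    diagUnit a ∈ ⁅lowerGenSubgroup I, lowerGenSubgroup I⁆ := by
  have ha₄ : ((a : R) - 1) ^ 2 ∈ I ^ 4 := by simpa [← pow_mul] using Ideal.pow_mem_pow ha 2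
  rw [diagUnit_eq_commutator_mul]
  refine mul_mem (mul_mem (Subgroup.commutator_mem_commutator
    (transvection_one_zero_mem_lowerGenSubgroup 1)
    (transvection_zero_one_mem_lowerGenSubgroup (by simpa using neg_mem ha))) ?_) ?_
  · exact transvection_zero_one_mem_commutator hu hspan
      (neg_mem (Ideal.mul_mem_left _ _ (Ideal.pow_le_pow_right (by norm_num) ha₄)))
  · exact transvection_one_zero_mem_commutator hu hspan
      (neg_mem (Ideal.mul_mem_left _ _ (Ideal.pow_le_self two_ne_zero ha)))

lemma levelSubgroup_le_commutator (hI : I ≤ Ideal.jacobson ⊥) {u : Rˣ} (hu : (u : R) - 1 ∈ I)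
    (hspan : I = Ideal.span {(u : R) ^ 2 - 1}) :
    levelSubgroup I ≤ ⁅lowerGenSubgroup I, lowerGenSubgroup I⁆ := by
  intro g hg
  obtain ⟨h₀₀, -, h₀₁, h₁₀⟩ := mem_levelSubgroup.1 hg
  obtain ⟨a, ha⟩ :=
    Ideal.isUnit_of_sub_one_mem_jacobson_bot _ (hI (Ideal.pow_le_self two_ne_zero h₀₀))
  rw [eq_transvection_mul_diagUnit_mul_transvection g a ha]
  refine mul_mem (mul_mem ?_ (diagUnit_mem_commutator hu hspan (ha ▸ h₀₀))) ?_
  · exact transvection_one_zero_mem_commutator hu hspan (I.mul_mem_right _ h₁₀)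
  · exact transvection_zero_one_mem_commutator hu hspan ((I ^ 3).mul_mem_left _ h₀₁)

end Matrix.SpecialLinearGroup

lemma IsLocalRing.isUnit_two_of_ringChar_ne_two {R : Type*} [CommRing R] [IsLocalRing R]
    (h : ringChar (ResidueField R) ≠ 2) : IsUnit (2 : R) :=
  (residue_ne_zero_iff_isUnit _).1 (by rw [map_ofNat]; exact Ring.two_ne_zero h)

lemma IsDiscreteValuationRing.exists_unit_sub_one_mem_and_maximalIdeal_eq_span
    {R : Type*} [CommRing R] [IsDomain R] [IsDiscreteValuationRing R] (h2 : IsUnit (2 : R)) :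
    ∃ u : Rˣ, (u : R) - 1 ∈ IsLocalRing.maximalIdeal R ∧
      IsLocalRing.maximalIdeal R = Ideal.span {(u : R) ^ 2 - 1} := by
  obtain ⟨π, hπ⟩ := exists_irreducible R
  have hπm : π ∈ IsLocalRing.maximalIdeal R := hπ.not_isUnit
  obtain ⟨u, hu⟩ : IsUnit (1 + π) := Ideal.isUnit_of_sub_one_mem_jacobson_bot _
    (by simpa using maximalIdeal_le_jacobson ⊥ hπm)
  have h2π : IsUnit (2 + π) := (residue_ne_zero_iff_isUnit _).1 <| by
    rwa [map_add, (residue_eq_zero_iff π).2 hπm, add_zero, residue_ne_zero_iff_isUnit]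
  refine ⟨u, by simpa [hu] using hπm, (irreducible_iff_uniformizer _).1 ?_⟩
  rw [hu, show (1 + π) ^ 2 - 1 = π * (2 + π) by ring]
  exact (associated_mul_unit_right π _ h2π).irreducible hπ

open Matrix.SpecialLinearGroup in
theorem stmt15_general (𝒪 : Type*) [CommRing 𝒪] [IsDomain 𝒪] [IsDiscreteValuationRing 𝒪]
    [TopologicalSpace 𝒪] [IsTopologicalRing 𝒪] (hadic : IsAdic (maximalIdeal 𝒪))
    (p : ℕ) (hodd : p ≠ 2) (hchar : CharP (ResidueField 𝒪) p) :
    closure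
      ((⁅(Subgroup.closure
          {g : Matrix.SpecialLinearGroup (Fin 2) 𝒪 |
            (g : Matrix (Fin 2) (Fin 2) 𝒪) = -1 ∨
            (g 0 0 - 1 ∈ maximalIdeal 𝒪 ∧ g 1 1 - 1 ∈ maximalIdeal 𝒪 ∧
              g 0 1 ∈ maximalIdeal 𝒪 ^ 2)}),
        (Subgroup.closure
          {g : Matrix.SpecialLinearGroup (Fin 2) 𝒪 |
            (g : Matrix (Fin 2) (Fin 2) 𝒪) = -1 ∨
            (g 0 0 - 1 ∈ maximalIdeal 𝒪 ∧ g 1 1 - 1 ∈ maximalIdeal 𝒪 ∧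
              g 0 1 ∈ maximalIdeal 𝒪 ^ 2)})⁆ :
        Subgroup (Matrix.SpecialLinearGroup (Fin 2) 𝒪)) :
          Set (Matrix.SpecialLinearGroup (Fin 2) 𝒪)) =
      {g : Matrix.SpecialLinearGroup (Fin 2) 𝒪 |
        g 0 0 - 1 ∈ maximalIdeal 𝒪 ^ 2 ∧ g 1 1 - 1 ∈ maximalIdeal 𝒪 ^ 2 ∧
          g 0 1 ∈ maximalIdeal 𝒪 ^ 3 ∧ g 1 0 ∈ maximalIdeal 𝒪} := by
  obtain ⟨u, hu, hspan⟩ :=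
    IsDiscreteValuationRing.exists_unit_sub_one_mem_and_maximalIdeal_eq_span
      (isUnit_two_of_ringChar_ne_two (ringChar.eq_iff.2 hchar ▸ hodd))
  have hcomm : ⁅lowerGenSubgroup (maximalIdeal 𝒪), lowerGenSubgroup (maximalIdeal 𝒪)⁆ =
      levelSubgroup (maximalIdeal 𝒪) :=
    le_antisymm
      ((Subgroup.commutator_mono lowerGenSubgroup_le_lowerScalarSubgroup
        lowerGenSubgroup_le_lowerScalarSubgroup).trans commutator_lowerScalarSubgroup_le)
      (levelSubgroup_le_commutator (maximalIdeal_le_jacobson ⊥) hu hspan)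
  change closure ((⁅lowerGenSubgroup (maximalIdeal 𝒪), lowerGenSubgroup (maximalIdeal 𝒪)⁆ :
    Subgroup SL(2, 𝒪)) : Set SL(2, 𝒪)) = _
  rw [hcomm, (isClosed_levelSubgroup hadic).closure_eq]
  ext g
  exact mem_levelSubgroup

/-- let `𝒪` be the ring of integers of a finite extension of `ℚ_p` (a discrete
valuation ring with its `𝔐`-adic topology), with odd residue characteristic `p` and residue
field of cardinality `q > 3`.  Let `L ≤ SL₂(𝒪)` be the subgroup generated by `-id` together
with all matrices `(a, b; c, d)` with `a, d ∈ 1+𝔐`, `b ∈ 𝔐²`, `c ∈ 𝒪`.  Then the closure of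
the commutator subgroup `[L, L]` equals
`{(a, b; c, d) ∈ SL₂(𝒪) : a, d ∈ 1+𝔐², b ∈ 𝔐³, c ∈ 𝔐}`. -/
theorem stmt15 (𝒪 : Type*) [CommRing 𝒪] [IsDomain 𝒪] [IsDiscreteValuationRing 𝒪]
    [TopologicalSpace 𝒪] [IsTopologicalRing 𝒪] (hadic : IsAdic (maximalIdeal 𝒪))
    (p : ℕ) (hp : p.Prime) (hodd : p ≠ 2) (hchar : CharP (ResidueField 𝒪) p)
    (hq : 3 < Nat.card (ResidueField 𝒪)) :
    closure
      ((⁅(Subgroup.closure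
          {g : Matrix.SpecialLinearGroup (Fin 2) 𝒪 |
            (g : Matrix (Fin 2) (Fin 2) 𝒪) = -1 ∨
            (g 0 0 - 1 ∈ maximalIdeal 𝒪 ∧ g 1 1 - 1 ∈ maximalIdeal 𝒪 ∧
              g 0 1 ∈ maximalIdeal 𝒪 ^ 2)}),
        (Subgroup.closure
          {g : Matrix.SpecialLinearGroup (Fin 2) 𝒪 |
            (g : Matrix (Fin 2) (Fin 2) 𝒪) = -1 ∨
            (g 0 0 - 1 ∈ maximalIdeal 𝒪 ∧ g 1 1 - 1 ∈ maximalIdeal 𝒪 ∧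
              g 0 1 ∈ maximalIdeal 𝒪 ^ 2)})⁆ :
        Subgroup (Matrix.SpecialLinearGroup (Fin 2) 𝒪)) :
          Set (Matrix.SpecialLinearGroup (Fin 2) 𝒪)) =
      {g : Matrix.SpecialLinearGroup (Fin 2) 𝒪 |
        g 0 0 - 1 ∈ maximalIdeal 𝒪 ^ 2 ∧ g 1 1 - 1 ∈ maximalIdeal 𝒪 ^ 2 ∧
          g 0 1 ∈ maximalIdeal 𝒪 ^ 3 ∧ g 1 0 ∈ maximalIdeal 𝒪} :=
  stmt15_general 𝒪 hadic p hodd hchar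
end
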